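/- Let F₂ be the free group on two generators g₁, g₂ and let ℓ²(F₂) be the Hilbert space of square-summable complex-valued functions on F₂. For g ∈ F₂ let L_g and R_g be the left and right translation unitaries on ℓ²(F₂), given by (L_g ξ)(h) = ξ(g⁻¹h) and (R_g ξ)(h) = ξ(hg). Then ‖1 + L_{g₂}R_{g₂} + L_{g₂⁻¹}R_{g₂⁻¹} + L_{g₁}R_{g₁}‖ > ‖1 + L_{g₁}R_{g₂} + L_{g₁⁻¹}R_{g₂⁻¹} + L_{g₂}R_{g₁}‖, where ‖·‖ denotes the operator norm on bounded operators on ℓ²(F₂). -/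

import Mathlib

/-!
The vector `δ₁` is fixed by every `L g * R g`, so the diagonal operator has norm at least `4`.
The mixed operator is `1 + B` with `(B ξ) x = ∑ i, ξ (aᵢ * x * bᵢ)` for the letter pairs
`(g₁⁻¹, g₂)`, `(g₁, g₂⁻¹)`, `(g₂⁻¹, g₁)`. The left letters are distinct and so are the right ones,
so at most one of the three products `aᵢ * x * bᵢ` cancels against `x` on the left and at most one
on the right. The Schur test with the weight `(3/4) ^ |x|` then gives
`‖B‖ ≤ (4/3)² + 2 (3/4)² = 209/72 < 3`.
-/

open scoped ENNReal

noncomputable section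

/-- The free group `F₂` on two generators. -/
abbrev F₂ : Type := FreeGroup (Fin 2)

/-- The first generator `g₁` of `F₂`. -/
def g₁ : F₂ := FreeGroup.of 0

/-- The second generator `g₂` of `F₂`. -/
def g₂ : F₂ := FreeGroup.of 1

/-- The Hilbert space `ℓ²(F₂)` of square-summable complex functions on `F₂`. -/
abbrev l2F₂ := lp (fun _ : F₂ => ℂ) 2

lemma memℓp_comp_equiv {α β : Type*} {f : β → ℂ} (e : α ≃ β) (hf : Memℓp f 2) :
    Memℓp (fun a => f (e a)) 2 := by
  apply memℓp_gen
  exact (e.summable_iff (f := fun b => ‖f b‖ ^ (2 : ℝ≥0∞).toReal)).mpr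
    (hf.summable (by norm_num))

/-- The linear isometry of `ℓ²` spaces induced by composition with an equivalence of the
index sets. -/
def lpCompEquiv {α β : Type*} (e : α ≃ β) :
    lp (fun _ : β => ℂ) 2 ≃ₗᵢ[ℂ] lp (fun _ : α => ℂ) 2 where
  toFun f := ⟨fun a => f (e a), memℓp_comp_equiv e (lp.memℓp f)⟩
  invFun f := ⟨fun b => f (e.symm b), memℓp_comp_equiv e.symm (lp.memℓp f)⟩
  left_inv f := by apply lp.ext; funext b; simp
  right_inv f := by apply lp.ext; funext a; simp
  map_add' f g := by apply lp.ext; funext a; rfl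
  map_smul' c f := by apply lp.ext; funext a; rfl
  norm_map' f := by
    rw [lp.norm_eq_tsum_rpow (by norm_num), lp.norm_eq_tsum_rpow (by norm_num)]
    congr 1
    exact e.tsum_eq (fun b => ‖f b‖ ^ (2 : ℝ≥0∞).toReal)

/-- The left translation unitary `L g` on `ℓ²(F₂)`, given by `(L g ξ) h = ξ (g⁻¹ * h)`. -/
def L (g : F₂) : l2F₂ →L[ℂ] l2F₂ :=
  (lpCompEquiv ((Equiv.mulLeft g).symm)).toLinearIsometry.toContinuousLinearMap

/-- The right translation unitary `R g` on `ℓ²(F₂)`, given by `(R g ξ) h = ξ (h * g)`. -/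
def R (g : F₂) : l2F₂ →L[ℂ] l2F₂ :=
  (lpCompEquiv (Equiv.mulRight g)).toLinearIsometry.toContinuousLinearMap

@[simp] lemma L_def (g : F₂) (ξ : l2F₂) (h : F₂) : L g ξ h = ξ (g⁻¹ * h) := rfl

@[simp] lemma R_def (g : F₂) (ξ : l2F₂) (h : F₂) : R g ξ h = ξ (h * g) := rfl


open Finset

theorem sum_ite_eq_le_of_injective {ι β : Type*} [Fintype ι] [DecidableEq β] {c : ι → β}
    (hc : Function.Injective c) (y : β) {A B : ℝ} (hBA : B ≤ A) :
    ∑ i, (if c i = y then A else B) ≤ A + (Fintype.card ι - 1) * B := by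
  calc ∑ i, (if c i = y then A else B)
      = ∑ i, (B + if c i = y then A - B else 0) := by
        congr! 1 with i; split_ifs <;> ring
    _ = Fintype.card ι * B + if ∃ i, c i = y then A - B else 0 := by
        rw [sum_add_distrib, Fintype.sum_ite_eq_ite_exists _ fun i j hi hj => hc (hi.trans hj.symm)]
        simp
    _ ≤ A + (Fintype.card ι - 1) * B := by split_ifs <;> linarith

theorem sq_le_inv_sq {q : ℝ} (hq₀ : 0 < q) (hq₁ : q ≤ 1) : q ^ 2 ≤ q⁻¹ ^ 2 := by
  gcongr
  exact hq₁.trans ((one_le_inv₀ hq₀).2 hq₁)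

namespace lp

variable {X ι E : Type*} [Fintype ι] [NormedAddCommGroup E]

theorem norm_le_of_schur_test (σ : ι → X ≃ X) {p : X → ℝ} (hp : ∀ x, 0 < p x) {C : ℝ}
    (hC : 0 ≤ C) (hσ : ∀ x, ∑ i, p (σ i x) ≤ C * p x)
    (hσ_symm : ∀ x, ∑ i, p ((σ i).symm x) ≤ C * p x) {ξ η : lp (fun _ : X => E) 2}
    (hη : ∀ x, η x = ∑ i, ξ (σ i x)) : ‖η‖ ≤ C * ‖ξ‖ := by
  classical
  refine lp.norm_le_of_forall_sum_le (by norm_num) (by positivity) fun s => ?_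
  simp only [ENNReal.toReal_ofNat, Real.rpow_two]
  set F : ι → X → ℝ := fun i k => p ((σ i).symm k) * ‖ξ k‖ ^ 2 / p k
  have hF : ∀ i k, 0 ≤ F i k := fun i k => by have := hp k; have := hp ((σ i).symm k); positivity
  have cauchy_schwarz : ∀ x, ‖η x‖ ^ 2 ≤ C * ∑ i, F i (σ i x) := fun x => calc
    ‖η x‖ ^ 2 ≤ (∑ i, ‖ξ (σ i x)‖) ^ 2 := by rw [hη]; gcongr; exact norm_sum_le _ _
    _ ≤ (∑ i, p (σ i x)) * ∑ i, ‖ξ (σ i x)‖ ^ 2 / p (σ i x) :=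
        sum_sq_le_sum_mul_sum_of_sq_le_mul _ (fun i _ => (hp _).le)
          (fun i _ => by have := hp (σ i x); positivity)
          (fun i _ => by rw [mul_div_cancel₀ _ (hp _).ne'])
    _ ≤ C * p x * ∑ i, ‖ξ (σ i x)‖ ^ 2 / p (σ i x) := by
        gcongr
        · exact sum_nonneg fun i _ => by have := hp (σ i x); positivity
        · exact hσ x
    _ = C * ∑ i, F i (σ i x) := by simp [F, mul_sum, mul_div_assoc, mul_assoc]
  set S := univ.biUnion fun i => s.map (σ i).toEmbedding
  calc ∑ x ∈ s, ‖η x‖ ^ 2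
      ≤ ∑ x ∈ s, C * ∑ i, F i (σ i x) := sum_le_sum fun x _ => cauchy_schwarz x
    _ = C * ∑ i, ∑ k ∈ s.map (σ i).toEmbedding, F i k := by
        rw [← mul_sum, sum_comm]; simp [sum_map]
    _ ≤ C * ∑ i, ∑ k ∈ S, F i k := by
        gcongr with i
        · exact fun k _ _ => hF i k
        · exact subset_biUnion_of_mem (fun j => s.map (σ j).toEmbedding) (mem_univ i)
    _ = C * ∑ k ∈ S, (∑ i, p ((σ i).symm k)) * ‖ξ k‖ ^ 2 / p k := by
        rw [sum_comm]; simp [F, sum_mul, sum_div]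
    _ ≤ C * ∑ k ∈ S, C * ‖ξ k‖ ^ 2 := by
        gcongr with k
        rw [div_le_iff₀ (hp k)]
        nlinarith [hσ_symm k, sq_nonneg ‖ξ k‖]
    _ ≤ C * (C * ‖ξ‖ ^ 2) := by
        rw [← mul_sum]
        gcongr
        simpa [Real.rpow_two] using lp.sum_rpow_le_norm_rpow (p := 2) (by norm_num) ξ S
    _ = (C * ‖ξ‖) ^ 2 := by ring

end lp

namespace FreeGroup

variable {α : Type*}

def invLetter (c : α × Bool) : α × Bool := (c.1, !c.2)

theorem invLetter_injective : Function.Injective (invLetter (α := α)) := fun c d h => by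
  simpa [invLetter, Prod.ext_iff] using h

theorem inv_mk_singleton (c : α × Bool) : (mk [c])⁻¹ = mk [invLetter c] := rfl

theorem imp_iff_ne_invLetter (a c : α × Bool) : (a.1 = c.1 → a.2 = c.2) ↔ c ≠ invLetter a := by
  obtain ⟨a₁, a₂⟩ := a
  obtain ⟨c₁, c₂⟩ := c
  cases a₂ <;> cases c₂ <;> simp [invLetter, eq_comm]

theorem isReduced_cons {a : α × Bool} {L : List (α × Bool)} (hL : IsReduced L)
    (ha : L.head? ≠ some (invLetter a)) : IsReduced (a :: L) :=
  List.isChain_cons.2 ⟨fun c hc => (imp_iff_ne_invLetter a c).2 fun e => ha (e ▸ hc), hL⟩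

theorem isReduced_append_singleton {L : List (α × Bool)} (hL : IsReduced L) {b : α × Bool}
    (hb : L.getLast? ≠ some (invLetter b)) : IsReduced (L ++ [b]) := by
  refine hL.append IsReduced.singleton fun c hc d hd h => ?_
  obtain rfl : d = b := by simpa using hd.symm
  exact ((imp_iff_ne_invLetter d c).2 (fun e => hb (e ▸ hc)) h.symm).symm

theorem getLast?_cons_ne_invLetter {a b : α × Bool} {L : List (α × Bool)}
    (hab : b ≠ invLetter a) (hb : L.getLast? ≠ some (invLetter b)) :
    (a :: L).getLast? ≠ some (invLetter b) := by
  rw [List.getLast?_cons]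
  cases h : L.getLast? with
  | none =>
    rintro ⟨⟩
    simp [invLetter] at hab
  | some c => simpa [h] using hb

variable [DecidableEq α]

theorem norm_mk_of_isReduced {L : List (α × Bool)} (h : IsReduced L) :
    norm (mk L) = L.length := by
  rw [norm, toWord_mk, h.reduce_eq]

theorem mk_singleton_mul (a : α × Bool) (x : FreeGroup α) : mk [a] * x = mk (a :: x.toWord) := by
  conv_lhs => rw [← mk_toWord (x := x)]
  rw [mul_mk]
  rfl

theorem mul_mk_singleton (x : FreeGroup α) (b : α × Bool) : x * mk [b] = mk (x.toWord ++ [b]) := by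
  conv_lhs => rw [← mk_toWord (x := x)]
  rw [mul_mk]

theorem norm_le_norm_mk_singleton_mul_add_one (a : α × Bool) (x : FreeGroup α) :
    norm x ≤ norm (mk [a] * x) + 1 := by
  calc norm x = norm ((mk [a])⁻¹ * (mk [a] * x)) := by group
    _ ≤ norm (mk [a] * x) + 1 := by
      rw [add_comm]
      exact (norm_mul_le _ _).trans (by rw [norm_inv_eq]; gcongr; exact norm_mk_le)

theorem norm_le_norm_mul_mk_singleton_add_one (x : FreeGroup α) (b : α × Bool) :
    norm x ≤ norm (x * mk [b]) + 1 := by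
  calc norm x = norm (x * mk [b] * (mk [b])⁻¹) := by group
    _ ≤ norm (x * mk [b]) + 1 :=
      (norm_mul_le _ _).trans (by rw [norm_inv_eq]; gcongr; exact norm_mk_le)

theorem norm_mk_singleton_mul {a : α × Bool} {x : FreeGroup α}
    (ha : x.toWord.head? ≠ some (invLetter a)) : norm (mk [a] * x) = norm x + 1 := by
  rw [mk_singleton_mul, norm_mk_of_isReduced (isReduced_cons isReduced_toWord ha)]
  rfl

theorem norm_mul_mk_singleton {b : α × Bool} {x : FreeGroup α}
    (hb : x.toWord.getLast? ≠ some (invLetter b)) : norm (x * mk [b]) = norm x + 1 := by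
  rw [mul_mk_singleton, norm_mk_of_isReduced (isReduced_append_singleton isReduced_toWord hb),
    List.length_append]
  rfl

theorem norm_mk_singleton_mul_mul_mk_singleton {a b : α × Bool} (hab : b ≠ invLetter a)
    {x : FreeGroup α} (ha : x.toWord.head? ≠ some (invLetter a))
    (hb : x.toWord.getLast? ≠ some (invLetter b)) : norm (mk [a] * x * mk [b]) = norm x + 2 := by
  have hax := isReduced_cons isReduced_toWord ha
  rw [mk_singleton_mul, mul_mk_singleton, toWord_mk, hax.reduce_eq,
    norm_mk_of_isReduced (isReduced_append_singleton hax (getLast?_cons_ne_invLetter hab hb))]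
  simp [norm]

/-- A product `a x b` with no cancellation has length `|x| + 2`, with one cancellation at least
`|x|`, and with two at least `|x| - 2`; the AM-GM inequality separates the two ends. -/
theorem pow_norm_mk_singleton_mul_mul_mk_singleton_le {q : ℝ} (hq₀ : 0 < q) (hq₁ : q ≤ 1)
    {a b : α × Bool} (hab : b ≠ invLetter a) (x : FreeGroup α) :
    q ^ norm (mk [a] * x * mk [b]) ≤ q ^ norm x *
      ((if x.toWord.head? = some (invLetter a) then q⁻¹ ^ 2 else q ^ 2) +
        (if x.toWord.getLast? = some (invLetter b) then q⁻¹ ^ 2 else q ^ 2)) / 2 := by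
  have amgm : 2 ≤ q⁻¹ ^ 2 + q ^ 2 := by
    have : q⁻¹ * q = 1 := inv_mul_cancel₀ hq₀.ne'
    nlinarith [sq_nonneg (q⁻¹ - q)]
  have hqx := pow_nonneg hq₀.le (norm x)
  split_ifs with ha hb hb
  · have h : norm x ≤ norm (mk [a] * x * mk [b]) + 2 := by
      have := norm_le_norm_mk_singleton_mul_add_one a x
      have := norm_le_norm_mul_mk_singleton_add_one (mk [a] * x) b
      omega
    have := pow_le_pow_of_le_one hq₀.le hq₁ h
    rw [pow_add] at this
    calc q ^ norm (mk [a] * x * mk [b]) = q ^ norm (mk [a] * x * mk [b]) * q ^ 2 * q⁻¹ ^ 2 := by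
          field_simp
      _ ≤ q ^ norm x * q⁻¹ ^ 2 := by gcongr
      _ = _ := by ring
  · have h : norm x ≤ norm (mk [a] * x * mk [b]) := by
      have := norm_mul_mk_singleton hb
      have := norm_le_norm_mk_singleton_mul_add_one a (x * mk [b])
      rw [← mul_assoc] at this
      omega
    calc q ^ norm (mk [a] * x * mk [b]) ≤ q ^ norm x := pow_le_pow_of_le_one hq₀.le hq₁ h
      _ ≤ _ := by nlinarith
  · have h : norm x ≤ norm (mk [a] * x * mk [b]) := by
      have := norm_mk_singleton_mul ha
      have := norm_le_norm_mul_mk_singleton_add_one (mk [a] * x) b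
      omega
    calc q ^ norm (mk [a] * x * mk [b]) ≤ q ^ norm x := pow_le_pow_of_le_one hq₀.le hq₁ h
      _ ≤ _ := by nlinarith
  · rw [norm_mk_singleton_mul_mul_mk_singleton hab ha hb, pow_add]
    exact le_of_eq (by ring)

variable {ι : Type*} [Fintype ι] {a b : ι → α × Bool}

theorem sum_pow_norm_mk_singleton_mul_mul_mk_singleton_le (ha : Function.Injective a)
    (hb : Function.Injective b) (hab : ∀ i, b i ≠ invLetter (a i)) {q : ℝ} (hq₀ : 0 < q)
    (hq₁ : q ≤ 1) (x : FreeGroup α) :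
    ∑ i, q ^ norm (mk [a i] * x * mk [b i]) ≤
      (q⁻¹ ^ 2 + (Fintype.card ι - 1) * q ^ 2) * q ^ norm x := by
  have hinj : ∀ {c : ι → α × Bool}, Function.Injective c →
      Function.Injective fun i => some (invLetter (c i)) := fun hc =>
    (Option.some_injective _).comp (invLetter_injective.comp hc)
  calc ∑ i, q ^ norm (mk [a i] * x * mk [b i])
      ≤ ∑ i, q ^ norm x *
          ((if x.toWord.head? = some (invLetter (a i)) then q⁻¹ ^ 2 else q ^ 2) +
            (if x.toWord.getLast? = some (invLetter (b i)) then q⁻¹ ^ 2 else q ^ 2)) / 2 :=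
        sum_le_sum fun i _ => pow_norm_mk_singleton_mul_mul_mk_singleton_le hq₀ hq₁ (hab i) x
    _ = q ^ norm x *
          ((∑ i, if some (invLetter (a i)) = x.toWord.head? then q⁻¹ ^ 2 else q ^ 2) +
            (∑ i, if some (invLetter (b i)) = x.toWord.getLast? then q⁻¹ ^ 2 else q ^ 2)) / 2 := by
        simp only [← mul_sum, ← sum_div, sum_add_distrib, eq_comm]
    _ ≤ q ^ norm x * ((q⁻¹ ^ 2 + (Fintype.card ι - 1) * q ^ 2) +
          (q⁻¹ ^ 2 + (Fintype.card ι - 1) * q ^ 2)) / 2 := by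
        gcongr
        · exact sum_ite_eq_le_of_injective (hinj ha) _ (sq_le_inv_sq hq₀ hq₁)
        · exact sum_ite_eq_le_of_injective (hinj hb) _ (sq_le_inv_sq hq₀ hq₁)
    _ = _ := by ring

theorem opNorm_le_of_apply_eq_sum (ha : Function.Injective a) (hb : Function.Injective b)
    (hab : ∀ i, b i ≠ invLetter (a i)) {q : ℝ} (hq₀ : 0 < q) (hq₁ : q ≤ 1)
    (T : lp (fun _ : FreeGroup α => ℂ) 2 →L[ℂ] lp (fun _ : FreeGroup α => ℂ) 2)
    (hT : ∀ ξ x, T ξ x = ∑ i, ξ (mk [a i] * x * mk [b i])) :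
    ‖T‖ ≤ q⁻¹ ^ 2 + (Fintype.card ι - 1) * q ^ 2 := by
  have hC : 0 ≤ q⁻¹ ^ 2 + (Fintype.card ι - 1) * q ^ 2 := by
    have := sq_le_inv_sq hq₀ hq₁
    have : (0 : ℝ) ≤ Fintype.card ι := Nat.cast_nonneg _
    nlinarith
  let σ : ι → FreeGroup α ≃ FreeGroup α := fun i =>
    (Equiv.mulLeft (mk [a i])).trans (Equiv.mulRight (mk [b i]))
  have hσ_symm : ∀ i x, (σ i).symm x = mk [invLetter (a i)] * x * mk [invLetter (b i)] :=
    fun i x => by simp [σ, ← inv_mk_singleton, mul_assoc]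
  refine T.opNorm_le_bound hC fun ξ => lp.norm_le_of_schur_test σ (p := fun x => q ^ norm x)
    (fun x => pow_pos hq₀ _) hC (fun x => ?_) (fun x => ?_) (hT ξ)
  · exact sum_pow_norm_mk_singleton_mul_mul_mk_singleton_le ha hb hab hq₀ hq₁ x
  · simp only [hσ_symm]
    exact sum_pow_norm_mk_singleton_mul_mul_mk_singleton_le (invLetter_injective.comp ha)
      (invLetter_injective.comp hb) (fun i h => hab i (invLetter_injective h)) hq₀ hq₁ x

end FreeGroup

theorem L_mul_R_apply_single_one (g : F₂) :
    (L g * R g) (lp.single 2 1 1) = lp.single 2 (1 : F₂) (1 : ℂ) := by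
  ext h
  have : g⁻¹ * h * g = 1 ↔ h = 1 := by simpa using conj_eq_one_iff (a := g⁻¹) (b := h)
  simp [lp.single_apply, Pi.single_apply, this]

theorem four_le_norm_one_add_L_mul_R (g h k : F₂) :
    4 ≤ ‖(1 : l2F₂ →L[ℂ] l2F₂) + L g * R g + L h * R h + L k * R k‖ := by
  have hv : ((1 : l2F₂ →L[ℂ] l2F₂) + L g * R g + L h * R h + L k * R k) (lp.single 2 1 1) =
      (4 : ℂ) • lp.single 2 (1 : F₂) (1 : ℂ) := by
    simp only [add_apply, one_apply_eq_self, L_mul_R_apply_single_one]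
    module
  have := ((1 : l2F₂ →L[ℂ] l2F₂) + L g * R g + L h * R h + L k * R k).le_opNorm (lp.single 2 1 1)
  rw [hv, norm_smul, lp.norm_single (by norm_num)] at this
  simpa using this

theorem norm_L_mul_R_mixed_le :
    ‖L g₁ * R g₂ + L g₁⁻¹ * R g₂⁻¹ + L g₂ * R g₁‖ ≤ 209 / 72 := by
  have h := FreeGroup.opNorm_le_of_apply_eq_sum (ι := Fin 3)
    (a := ![(0, false), (0, true), (1, false)]) (b := ![(1, true), (1, false), (0, true)])
    (by decide) (by decide) (by decide) (q := 3 / 4) (by norm_num) (by norm_num)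
    (L g₁ * R g₂ + L g₁⁻¹ * R g₂⁻¹ + L g₂ * R g₁) (fun ξ x => by simp [Fin.sum_univ_three]; rfl)
  norm_num at h
  exact h

/-- Inequality (2.8) of Example 2.6 of Magajna, "Pointwise approximation by elementary complete
contractions":
`‖1 + L_{g₂}R_{g₂} + L_{g₂⁻¹}R_{g₂⁻¹} + L_{g₁}R_{g₁}‖ >
 ‖1 + L_{g₁}R_{g₂} + L_{g₁⁻¹}R_{g₂⁻¹} + L_{g₂}R_{g₁}‖` on `ℓ²(F₂)`. -/
theorem norm_diagonal_gt_norm_mixed :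
    ‖(1 : l2F₂ →L[ℂ] l2F₂) + L g₂ * R g₂ + L g₂⁻¹ * R g₂⁻¹ + L g₁ * R g₁‖ >
      ‖(1 : l2F₂ →L[ℂ] l2F₂) + L g₁ * R g₂ + L g₁⁻¹ * R g₂⁻¹ + L g₂ * R g₁‖ := calc
  ‖(1 : l2F₂ →L[ℂ] l2F₂) + L g₁ * R g₂ + L g₁⁻¹ * R g₂⁻¹ + L g₂ * R g₁‖
      ≤ ‖(1 : l2F₂ →L[ℂ] l2F₂)‖ + ‖L g₁ * R g₂ + L g₁⁻¹ * R g₂⁻¹ + L g₂ * R g₁‖ := by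
        rw [add_assoc, add_assoc, ← add_assoc (L g₁ * R g₂)]
        exact norm_add_le _ _
    _ ≤ 1 + 209 / 72 := add_le_add ContinuousLinearMap.norm_id_le norm_L_mul_R_mixed_le
    _ < 4 := by norm_num
    _ ≤ _ := four_le_norm_one_add_L_mul_R g₂ g₂⁻¹ g₁

end
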